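/- arXiv:1506.00694 — 2 statements merged into one kernel-verified Lean document; each statement's English description precedes it below -/
import Mathlib

section
/- Let ⟨I, w⟩ be a TU game with seller 0 such that w is monotone (w(S) ≤ w(S') whenever S ⊆ S') and bidder submodular (BSM). Define the payoff vector u by u(i) = w(I) − w(I∖{i}) for every bidder i ≠ 0 (the Vickrey payoff) and u(0) = w(I) − Σ_{i≠0} (w(I) − w(I∖{i})). Then u lies in the core of ⟨I, w⟩; in particular, the core is nonempty. -/
open Finset

/-- In a TU game with seller `seller` whose worth function `w` is
monotone and bidder submodular (BSM), the payoff vector paying every bidder its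
Vickrey payoff `w(I) − w(I∖{i})` and leaving the residual to the seller lies in
the core; in particular the core is nonempty. -/
theorem vickrey_payoff_in_core
    {I : Type*} [Fintype I] [DecidableEq I] (seller : I) (w : Finset I → ℝ)
    (h_empty : w ∅ = 0)
    (h_noSeller : ∀ S : Finset I, seller ∉ S → w S = 0)
    (h_mono : ∀ S S' : Finset I, S ⊆ S' → w S ≤ w S')
    (h_bsm : ∀ S : Finset I, seller ∈ S → ∀ T ⊆ S \ {seller},
      w S - w (S \ T) ≥ ∑ i ∈ T, (w S - w (S \ {i})))
    (u : I → ℝ)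
    (hu_bidder : ∀ i : I, i ≠ seller → u i = w univ - w (univ \ {i}))
    (hu_seller : u seller =
      w univ - ∑ i ∈ univ \ {seller}, (w univ - w (univ \ {i}))) :
    (∑ i, u i = w univ) ∧ ∀ S : Finset I, ∑ i ∈ S, u i ≥ w S := by
  have hbidder_nonneg : ∀ i : I, i ≠ seller → 0 ≤ u i := by
    intro i hi
    rw [hu_bidder i hi]
    have := h_mono (univ \ {i}) univ (sdiff_subset)
    linarith
  have heff : ∑ i, u i = w univ := by
    have hsplit : ∑ i, u i = u seller + ∑ i ∈ univ \ {seller}, u i := by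
      rw [← Finset.sum_sdiff (Finset.singleton_subset_iff.mpr (mem_univ seller))]
      rw [Finset.sum_singleton]
      ring
    have hsum : ∑ i ∈ univ \ {seller}, u i
        = ∑ i ∈ univ \ {seller}, (w univ - w (univ \ {i})) := by
      apply Finset.sum_congr rfl
      intro i hi
      simp only [mem_sdiff, mem_singleton] at hi
      exact hu_bidder i hi.2
    rw [hsplit, hsum, hu_seller]; ring
  refine ⟨heff, ?_⟩
  intro S
  by_cases hs : seller ∈ S
  · have hT : univ \ S ⊆ univ \ {seller} := by
      apply sdiff_subset_sdiff (le_refl _)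
      simpa using hs
    have hbsm := h_bsm univ (mem_univ seller) (univ \ S) hT
    have hSc : univ \ (univ \ S) = S := by
      simp [sdiff_sdiff_right_self, inf_eq_inter]
    rw [hSc] at hbsm
    have hsplit : ∑ i, u i = ∑ i ∈ S, u i + ∑ i ∈ univ \ S, u i := by
      rw [← Finset.sum_sdiff (subset_univ S)]; ring
    have hsum : ∑ i ∈ univ \ S, u i
        = ∑ i ∈ univ \ S, (w univ - w (univ \ {i})) := by
      apply Finset.sum_congr rfl
      intro i hi
      simp only [mem_sdiff, mem_univ, true_and] at hi
      exact hu_bidder i (fun h => hi (h ▸ hs))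
    rw [heff] at hsplit
    rw [hsum] at hsplit
    linarith
  · have : w S = 0 := h_noSeller S hs
    rw [this]
    apply Finset.sum_nonneg
    intro i hi
    exact hbidder_nonneg i (fun h => hs (h ▸ hi))
end

section
/- Let ⟨I, w⟩ be a TU game with seller 0 such that w is monotone (w(S) ≤ w(S') whenever S ⊆ S') and bidder submodular (BSM). Then there is a unique bidder-optimal core outcome, unanimously preferred by all bidders: the payoff vector u* with u*(i) = w(I) − w(I∖{i}) for bidders i ≠ 0 and u*(0) = w(I) − Σ_{i≠0} (w(I) − w(I∖{i})) lies in the core, and every core payoff vector u satisfies u(i) ≤ u*(i) for every bidder i ≠ 0. -/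
open Finset

/-- In a TU game with seller `seller` whose worth function `w` is
monotone and bidder submodular (BSM), there is a unique bidder-optimal core outcome,
unanimously preferred by all bidders: the Vickrey payoff vector `u*` lies in the core,
and every core payoff `u` satisfies `u i ≤ u* i` for every bidder `i ≠ seller`. -/
theorem bidder_optimal_core_outcome
    {I : Type*} [Fintype I] [DecidableEq I] (seller : I) (w : Finset I → ℝ)
    (h_empty : w ∅ = 0)
    (h_noSeller : ∀ S : Finset I, seller ∉ S → w S = 0)
    (h_mono : ∀ S S' : Finset I, S ⊆ S' → w S ≤ w S')
    (h_bsm : ∀ S : Finset I, seller ∈ S → ∀ T ⊆ S \ {seller},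
      w S - w (S \ T) ≥ ∑ i ∈ T, (w S - w (S \ {i})))
    (ustar : I → ℝ)
    (hustar_bidder : ∀ i : I, i ≠ seller → ustar i = w univ - w (univ \ {i}))
    (hustar_seller : ustar seller =
      w univ - ∑ i ∈ univ \ {seller}, (w univ - w (univ \ {i}))) :
    ((∑ i, ustar i = w univ) ∧ ∀ S : Finset I, ∑ i ∈ S, ustar i ≥ w S) ∧
    ∀ u : I → ℝ,
      ((∑ i, u i = w univ) ∧ ∀ S : Finset I, ∑ i ∈ S, u i ≥ w S) →
      ∀ i : I, i ≠ seller → u i ≤ ustar i := by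
  have hnonneg : ∀ i : I, i ≠ seller → 0 ≤ ustar i := by
    intro i hi
    rw [hustar_bidder i hi]
    have := h_mono (univ \ {i}) univ (sdiff_subset)
    linarith
  have hsplit : ∑ i ∈ univ \ {seller}, ustar i + ∑ i ∈ ({seller} : Finset I), ustar i
      = ∑ i, ustar i :=
    Finset.sum_sdiff (singleton_subset_iff.mpr (mem_univ seller))
  have hbsum : ∑ i ∈ univ \ {seller}, ustar i
      = ∑ i ∈ univ \ {seller}, (w univ - w (univ \ {i})) := by
    refine Finset.sum_congr rfl fun i hi => ?_
    exact hustar_bidder i (by simpa using (Finset.mem_sdiff.mp hi).2)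
  rw [Finset.sum_singleton, hustar_seller, hbsum] at hsplit
  have heff : ∑ i, ustar i = w univ := by linarith
  refine ⟨⟨heff, ?_⟩, ?_⟩
  · intro S
    by_cases hS : seller ∈ S
    · set T : Finset I := univ \ S with hT
      have hTsub : T ⊆ univ \ {seller} :=
        sdiff_subset_sdiff (Finset.Subset.refl _) (singleton_subset_iff.mpr hS)
      have hbsm := h_bsm univ (mem_univ seller) T hTsub
      have hUT : univ \ T = S := by
        simp [hT, Finset.sdiff_sdiff_self_left]
      rw [hUT] at hbsm
      have hsplit2 : ∑ i ∈ univ \ S, ustar i + ∑ i ∈ S, ustar i = ∑ i, ustar i :=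
        Finset.sum_sdiff (Finset.subset_univ S)
      have hTsum : ∑ i ∈ T, ustar i = ∑ i ∈ T, (w univ - w (univ \ {i})) := by
        refine Finset.sum_congr rfl fun i hi => ?_
        exact hustar_bidder i (by simpa using (Finset.mem_sdiff.mp (hTsub hi)).2)
      rw [hT] at hTsum
      linarith
    · rw [h_noSeller S hS]
      exact Finset.sum_nonneg fun i hi =>
        hnonneg i (fun h => hS (h ▸ hi))
  · rintro u ⟨hueff, hucore⟩ i hi
    have h1 := hucore (univ \ {i})
    have h2 : ∑ j ∈ univ \ {i}, u j + ∑ j ∈ ({i} : Finset I), u j = ∑ j, u j :=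
      Finset.sum_sdiff (singleton_subset_iff.mpr (mem_univ i))
    rw [Finset.sum_singleton] at h2
    rw [hustar_bidder i hi]
    linarith
end
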